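/- Let q = 2^m with m odd and k a positive integer with gcd(k, q+1) = 1, and let F(x) = x^(k(q-1)) on F_{q^2}. Let w ∈ F_{q^2} be a primitive cube root of unity. Then the equations F(x+1) + F(x) = w and F(x+1) + F(x) = w^2 each have no solution in F_{q^2}, i.e., δ_F(1,w) = δ_F(1,w^2) = 0. -/

import Mathlib

/-!
Write `u = F(x+1)` and `v = F(x)`. For `x ∉ {0, 1}` both lie in the group of `(q+1)`-th roots
of unity, as does `b` because `3 ∣ 2^m + 1` for odd `m`; on that group the Frobenius `y ↦ y^q`
is inversion. Applying it to `u + v = b` gives `u⁻¹ + v⁻¹ = b⁻¹`, hence `uv = b²`, so `u` and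
`v` are the roots of `T² + bT + b²`, namely `1` and `b²`. But `gcd(k, q+1) = 1` makes
`F(y) = 1` equivalent to `y ∈ 𝔽_q`, and `x ∈ 𝔽_q ↔ x + 1 ∈ 𝔽_q`, so `u = 1 ↔ v = 1`.
Thus `u = v = 1` and `b = u + v = 0`, which is absurd.
-/

theorem three_dvd_two_pow_add_one {m : ℕ} (hm : Odd m) : 3 ∣ 2 ^ m + 1 := by
  simpa using hm.nat_add_dvd_pow_add_pow 2 1

theorem pow_eq_inv_of_pow_add_one_eq_one {M : Type*} [DivisionMonoid M] {n : ℕ} {u : M}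
    (hu : u ^ (n + 1) = 1) : u ^ n = u⁻¹ :=
  eq_inv_of_mul_eq_one_left (by rwa [← pow_succ])

theorem CharTwo.eq_one_or_eq_one_of_add_eq_of_inv_add_inv_eq {K : Type*} [Field K] [CharP K 2]
    {u v b : K} (hu : u ≠ 0) (hv : v ≠ 0) (hb : b ^ 2 + b + 1 = 0)
    (hsum : u + v = b) (hinv : u⁻¹ + v⁻¹ = b⁻¹) : u = 1 ∨ v = 1 := by
  have hb0 : b ≠ 0 := by rintro rfl; norm_num at hb
  have hprod : u * v = b ^ 2 := by
    field_simp at hinv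
    linear_combination -hinv + b * hsum
  have hfac : (u + 1) * (u + b ^ 2) = 0 := by
    linear_combination u * hsum - hprod + u * hb
  rcases mul_eq_zero.mp hfac with h | h
  · left
    rwa [CharTwo.add_eq_zero] at h
  · right
    rw [CharTwo.add_eq_zero] at h
    exact mul_left_cancel₀ hu (by rw [hprod, h, mul_one])

section FiniteFieldOfSquareOrder

variable {K : Type*} [Field K] [Fintype K] {q : ℕ}

theorem pow_sub_one_pow_add_one_eq_one (hcard : Fintype.card K = q ^ 2) {y : K} (hy : y ≠ 0) :
    (y ^ (q - 1)) ^ (q + 1) = 1 := by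
  rw [← pow_mul, mul_comm, ← Nat.sq_sub_sq, one_pow, ← hcard]
  exact FiniteField.pow_card_sub_one_eq_one y hy

theorem pow_mul_sub_one_pow_add_one_eq_one (hcard : Fintype.card K = q ^ 2) (k : ℕ) {y : K}
    (hy : y ≠ 0) : (y ^ (k * (q - 1))) ^ (q + 1) = 1 := by
  rw [mul_comm, pow_mul, ← pow_mul, mul_comm, pow_mul, pow_sub_one_pow_add_one_eq_one hcard hy,
    one_pow]

theorem pow_mul_sub_one_eq_one_iff (hcard : Fintype.card K = q ^ 2) {k : ℕ}
    (hk : Nat.Coprime k (q + 1)) {y : K} (hy : y ≠ 0) :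
    y ^ (k * (q - 1)) = 1 ↔ y ^ q = y := by
  have hq : q ≠ 0 := by rintro rfl; simp at hcard
  rw [← pow_sub_one_mul hq, mul_eq_right₀ hy, mul_comm, pow_mul]
  constructor
  · intro h
    have := pow_gcd_eq_one.mpr ⟨h, pow_sub_one_pow_add_one_eq_one hcard hy⟩
    rwa [hk.gcd_eq_one, pow_one] at this
  · intro h
    rw [h, one_pow]

end FiniteFieldOfSquareOrder

theorem CharTwo.pow_mul_sub_one_add_pow_mul_sub_one_ne {K : Type*} [Field K] [Fintype K]
    [CharP K 2] {m k : ℕ} (hm : Odd m) (hk : 0 < k) (hcard : Fintype.card K = (2 ^ m) ^ 2)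
    (hgcd : Nat.Coprime k (2 ^ m + 1)) {b : K} (hb3 : b ^ 3 = 1) (hb1 : b ≠ 1) (x : K) :
    (x + 1) ^ (k * (2 ^ m - 1)) + x ^ (k * (2 ^ m - 1)) ≠ b := by
  set q := 2 ^ m
  set e := k * (q - 1)
  have he : e ≠ 0 :=
    Nat.mul_ne_zero hk.ne' (Nat.sub_ne_zero_of_lt (Nat.one_lt_two_pow hm.pos.ne'))
  have hb : b ^ 2 + b + 1 = 0 := by
    refine (mul_eq_zero.mp ?_).resolve_left (sub_ne_zero.mpr hb1)
    linear_combination hb3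
  have hfrob (y z : K) : (y + z) ^ q = y ^ q + z ^ q := add_pow_char_pow y z 2 m
  intro hx
  by_cases hx0 : x = 0
  · simp [hx0, he, hb1.symm] at hx
  by_cases hx1 : x + 1 = 0
  · rw [CharTwo.add_eq_zero] at hx1
    simp [hx1, he, CharTwo.add_self_eq_zero, hb1.symm] at hx
  have hbq : b ^ q = b⁻¹ := by
    obtain ⟨c, hc⟩ := three_dvd_two_pow_add_one hm
    exact pow_eq_inv_of_pow_add_one_eq_one (by rw [hc, pow_mul, hb3, one_pow])
  have hunit {y : K} (hy : y ≠ 0) : (y ^ e) ^ q = (y ^ e)⁻¹ :=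
    pow_eq_inv_of_pow_add_one_eq_one (pow_mul_sub_one_pow_add_one_eq_one hcard k hy)
  have hinv : ((x + 1) ^ e)⁻¹ + (x ^ e)⁻¹ = b⁻¹ := by
    rw [← hunit hx1, ← hunit hx0, ← hfrob, hx, hbq]
  have hiff : (x + 1) ^ e = 1 ↔ x ^ e = 1 := by
    rw [pow_mul_sub_one_eq_one_iff hcard hgcd hx1, pow_mul_sub_one_eq_one_iff hcard hgcd hx0,
      hfrob, one_pow, add_left_inj]
  have hboth : (x + 1) ^ e = 1 ∧ x ^ e = 1 := by
    rcases CharTwo.eq_one_or_eq_one_of_add_eq_of_inv_add_inv_eq (pow_ne_zero e hx1)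
      (pow_ne_zero e hx0) hb hx hinv with h | h
    · exact ⟨h, hiff.mp h⟩
    · exact ⟨hiff.mpr h, h⟩
  rw [hboth.1, hboth.2, CharTwo.add_self_eq_zero] at hx
  simp [← hx] at hb3

theorem stmt_8_general (m q k : ℕ) (hmodd : Odd m) (hq : q = 2 ^ m)
    (hk : 0 < k) (hgcd : Nat.gcd k (q + 1) = 1)
    (K : Type*) [Field K] [Fintype K] (hcard : Fintype.card K = q ^ 2)
    (w : K) (hw3 : w ^ 3 = 1) (hw1 : w ≠ 1) :
    (∀ x : K, (x + 1) ^ (k * (q - 1)) + x ^ (k * (q - 1)) ≠ w) ∧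
    (∀ x : K, (x + 1) ^ (k * (q - 1)) + x ^ (k * (q - 1)) ≠ w ^ 2) := by
  subst hq
  have : CharP K 2 := charP_of_card_eq_prime_pow (by rw [hcard, ← pow_mul])
  have hw23 : (w ^ 2) ^ 3 = 1 := by rw [← pow_mul, mul_comm, pow_mul, hw3, one_pow]
  have hw21 : w ^ 2 ≠ 1 := fun h ↦ hw1 (by linear_combination hw3 - w * h)
  exact ⟨CharTwo.pow_mul_sub_one_add_pow_mul_sub_one_ne hmodd hk hcard hgcd hw3 hw1,
    CharTwo.pow_mul_sub_one_add_pow_mul_sub_one_ne hmodd hk hcard hgcd hw23 hw21⟩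

/-- Let `q = 2^m` with `m` odd, `k > 0` with `gcd(k, q+1) = 1`, `K` the field with
`q^2` elements and `F x = x^(k(q-1))`. Let `w ∈ K` be a primitive cube root of unity.
Then the equations `F(x+1) + F(x) = w` and `F(x+1) + F(x) = w^2` have no solution,
i.e. `δ_F(1,w) = δ_F(1,w^2) = 0`. -/
theorem stmt_8 (m q k : ℕ) (hm : 0 < m) (hmodd : Odd m) (hq : q = 2 ^ m)
    (hk : 0 < k) (hgcd : Nat.gcd k (q + 1) = 1)
    (K : Type*) [Field K] [Fintype K] [DecidableEq K] (hcard : Fintype.card K = q ^ 2)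
    (w : K) (hw3 : w ^ 3 = 1) (hw1 : w ≠ 1) :
    (∀ x : K, (x + 1) ^ (k * (q - 1)) + x ^ (k * (q - 1)) ≠ w) ∧
    (∀ x : K, (x + 1) ^ (k * (q - 1)) + x ^ (k * (q - 1)) ≠ w ^ 2) :=
  stmt_8_general m q k hmodd hq hk hgcd K hcard w hw3 hw1
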